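/- Let n ≥ 1, let L ⊆ S be a closed set with at least three points, and Ω = S \ L. Let Γ be a group of bijections of S such that every γ ∈ Γ satisfies γ(L) = L and admits a multiplier λ_γ : S → (0,∞) with ‖γx − γy‖ = λ_γ(x)^{1/2} λ_γ(y)^{1/2} ‖x − y‖ for all x,y ∈ S. Suppose there is a compact set D ⊆ Ω with ⋃_{γ∈Γ} γ(D) = Ω (compactness of the Kleinian quotient Ω/Γ), and let u : Ω → ℝ be continuous and Γ-invariant in the sense that e^{u(x)} = e^{u(γx)} · λ_γ(x) for all γ ∈ Γ and x ∈ Ω (so that e^{2u}g₀ descends to a metric on Ω/Γ). Then there exists K > 0 such that for all x ∈ Ω: (1/K)·(1/dist(x,L)) ≤ e^{u(x)} ≤ K·(1/dist(x,L)). (Theorem 2.1: any conformal metric on a compact Kleinian manifold lifts to an invariant metric whose conformal factor is comparable to the reciprocal of the distance to the limit set.) -/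
import Mathlib

open Metric
set_option maxHeartbeats 2000000

/-- Theorem 2.1: if the Kleinian manifold `Ω/Γ` is compact (there is a compact
set `D ⊆ Ω` whose `Γ`-translates cover `Ω`), then any `Γ`-invariant conformal
factor `e^u` on `Ω` is comparable to `1/dist(·, L)`.  Here `Γ` is a group of
Möbius transformations of the sphere `S`, each `γ ∈ Γ` preserving the closed set
`L` (the limit set, with at least three points) and admitting a multiplier
`λ_γ = |γ′|_s`. -/
theorem theorem_2_1 (n : ℕ) (hn : 1 ≤ n)
    (L : Set (Metric.sphere (0 : EuclideanSpace ℝ (Fin (n + 1))) 1))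
    (hLclosed : IsClosed L)
    (hL3 : ∃ a b c, a ∈ L ∧ b ∈ L ∧ c ∈ L ∧ a ≠ b ∧ a ≠ c ∧ b ≠ c)
    (Γ : Subgroup (Equiv.Perm (Metric.sphere (0 : EuclideanSpace ℝ (Fin (n + 1))) 1)))
    (lam : Equiv.Perm (Metric.sphere (0 : EuclideanSpace ℝ (Fin (n + 1))) 1) →
      Metric.sphere (0 : EuclideanSpace ℝ (Fin (n + 1))) 1 → ℝ)
    (hlam_pos : ∀ γ ∈ Γ, ∀ x, 0 < lam γ x)
    (hmult : ∀ γ ∈ Γ, ∀ x y,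
      dist (γ x) (γ y) = Real.sqrt (lam γ x) * Real.sqrt (lam γ y) * dist x y)
    (hLinv : ∀ γ ∈ Γ, (γ : Equiv.Perm _) '' L = L)
    (D : Set (Metric.sphere (0 : EuclideanSpace ℝ (Fin (n + 1))) 1))
    (hDcompact : IsCompact D) (hDsub : D ⊆ Lᶜ)
    (hcover : (⋃ γ ∈ Γ, (γ : Equiv.Perm _) '' D) = Lᶜ)
    (u : Metric.sphere (0 : EuclideanSpace ℝ (Fin (n + 1))) 1 → ℝ)
    (hu : ContinuousOn u Lᶜ)
    (hinv : ∀ γ ∈ Γ, ∀ x ∈ Lᶜ, Real.exp (u x) = Real.exp (u (γ x)) * lam γ x) :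
    ∃ K > (0 : ℝ), ∀ x ∈ Lᶜ,
      (1 / K) * (1 / Metric.infDist x L) ≤ Real.exp (u x) ∧
      Real.exp (u x) ≤ K * (1 / Metric.infDist x L) := by
  classical
  obtain ⟨a, b, c0, haL, hbL, hc0L, hab, hac, hbc⟩ := hL3
  have hsph2 : ∀ x y : Metric.sphere (0 : EuclideanSpace ℝ (Fin (n + 1))) 1, dist x y ≤ 2 := by
    intro x y
    rw [Subtype.dist_eq, dist_eq_norm]
    have hx := mem_sphere_zero_iff_norm.mp x.2
    have hy := mem_sphere_zero_iff_norm.mp y.2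
    calc ‖(x : EuclideanSpace ℝ (Fin (n + 1))) - y‖
        ≤ ‖(x : EuclideanSpace ℝ (Fin (n + 1)))‖ + ‖(y : EuclideanSpace ℝ (Fin (n + 1)))‖ :=
          norm_sub_le _ _
      _ ≤ 2 := by rw [hx, hy]; norm_num
  set ε := dist a b with hεdef
  have hε : 0 < ε := dist_pos.mpr hab
  have hLne : L.Nonempty := ⟨a, haL⟩
  rcases D.eq_empty_or_nonempty with rfl | hDne
  · refine ⟨1, one_pos, fun x hx => ?_⟩
    exfalso
    rw [← hcover] at hx
    simp at hx
  -- separation δ between D and L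
  obtain ⟨d₀, hd₀D, hd₀min⟩ :=
    hDcompact.exists_isMinOn hDne (continuous_infDist_pt L).continuousOn
  set δ := infDist d₀ L with hδdef
  have hδpos : 0 < δ := (hLclosed.notMem_iff_infDist_pos hLne).mp (hDsub hd₀D)
  have hδ : ∀ d ∈ D, ∀ q ∈ L, δ ≤ dist d q := fun d hd q hq =>
    le_trans (hd₀min hd) (infDist_le_dist_of_mem hq)
  -- bounds m ≤ exp (u d) ≤ M on D
  obtain ⟨d₁, hd₁D, hd₁min⟩ := hDcompact.exists_isMinOn hDne (hu.mono hDsub)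
  obtain ⟨d₂, hd₂D, hd₂max⟩ := hDcompact.exists_isMaxOn hDne (hu.mono hDsub)
  set m := Real.exp (u d₁) with hmdef
  set M := Real.exp (u d₂) with hMdef
  have hm : 0 < m := Real.exp_pos _
  have hM : 0 < M := Real.exp_pos _
  have hmle : ∀ d ∈ D, m ≤ Real.exp (u d) := fun d hd => Real.exp_le_exp.mpr (hd₁min hd)
  have hMle : ∀ d ∈ D, Real.exp (u d) ≤ M := fun d hd => Real.exp_le_exp.mpr (hd₂max hd)
  set c₁ := m * (ε * δ ^ 2 / 8) with hc₁def
  set c₂ := 24 * M / ε with hc₂def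
  have hc₁ : 0 < c₁ := by rw [hc₁def]; positivity
  have hc₂ : 0 < c₂ := by rw [hc₂def]; positivity
  have hKpos : 0 < max c₂ c₁⁻¹ := lt_of_lt_of_le hc₂ (le_max_left _ _)
  refine ⟨max c₂ c₁⁻¹, hKpos, fun x hx => ?_⟩
  rw [← hcover] at hx
  simp only [Set.mem_iUnion, Set.mem_image] at hx
  obtain ⟨γ, hγΓ, d, hdD, rfl⟩ := hx
  -- the multiplier square root
  set s : Metric.sphere (0 : EuclideanSpace ℝ (Fin (n + 1))) 1 → ℝ :=
    fun y => Real.sqrt (lam γ y) with hsdef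
  have hspos : ∀ y, 0 < s y := fun y => Real.sqrt_pos.mpr (hlam_pos γ hγΓ y)
  have hs2 : ∀ y, s y ^ 2 = lam γ y := fun y => Real.sq_sqrt (hlam_pos γ hγΓ y).le
  have key : ∀ y z, dist (γ y) (γ z) = s y * s z * dist y z := hmult γ hγΓ
  have keysq : ∀ y z, (dist (γ y) (γ z)) ^ 2 = lam γ y * lam γ z * (dist y z) ^ 2 := by
    intro y z
    rw [key y z, mul_pow, mul_pow, hs2 y, hs2 z]
  -- preimages of a and b in L
  have ha' : a ∈ (γ : Equiv.Perm _) '' L := (hLinv γ hγΓ).symm ▸ haL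
  have hb' : b ∈ (γ : Equiv.Perm _) '' L := (hLinv γ hγΓ).symm ▸ hbL
  obtain ⟨a₁, ha₁L, ha₁⟩ := ha'
  obtain ⟨b₁, hb₁L, hb₁⟩ := hb'
  -- LOWER BOUND on infDist (γ d) L
  have hstep : ∀ e₁, e₁ ∈ L → ∀ p, ε / 2 ≤ dist (γ p) (γ e₁) →
      ε ^ 2 * δ ^ 2 / 64 * lam γ d ≤ lam γ p := by
    intro e₁ he₁L p hpe
    have hup1 : lam γ d * lam γ e₁ * δ ^ 2 ≤ 4 := by
      have h := keysq d e₁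
      have h2 := hsph2 (γ d) (γ e₁)
      have h3 := hδ d hdD e₁ he₁L
      have hde : δ ^ 2 ≤ dist d e₁ ^ 2 := by nlinarith [hδpos]
      have h8 := mul_le_mul_of_nonneg_left hde
        (mul_pos (hlam_pos γ hγΓ d) (hlam_pos γ hγΓ e₁)).le
      have h9 : dist (γ d) (γ e₁) ^ 2 ≤ 4 := by
        nlinarith [dist_nonneg (x := γ d) (y := γ e₁)]
      nlinarith [h8, h9, h]
    have hlow1 : ε ^ 2 / 16 ≤ lam γ p * lam γ e₁ := by
      have h := keysq p e₁
      have h2 := hsph2 p e₁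
      have hA : ε ^ 2 / 4 ≤ dist (γ p) (γ e₁) ^ 2 := by nlinarith [hε]
      have hB : dist p e₁ ^ 2 ≤ 4 := by nlinarith [dist_nonneg (x := p) (y := e₁)]
      have hC := mul_le_mul_of_nonneg_left hB
        (mul_pos (hlam_pos γ hγΓ p) (hlam_pos γ hγΓ e₁)).le
      nlinarith [h, hA, hC, sq_nonneg (dist p e₁)]
    have h4 := mul_le_mul_of_nonneg_left hup1 (hlam_pos γ hγΓ p).le
    have h5 := mul_le_mul_of_nonneg_right hlow1
      (mul_nonneg (sq_nonneg δ) (hlam_pos γ hγΓ d).le)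
    nlinarith [h4, h5, hlam_pos γ hγΓ p, hlam_pos γ hγΓ e₁, hlam_pos γ hγΓ d, hδpos, hε]
  have hlow : ∀ q ∈ L, lam γ d * (ε * δ ^ 2 / 8) ≤ dist (γ d) q := by
    intro q hq
    have hq' : q ∈ (γ : Equiv.Perm _) '' L := (hLinv γ hγΓ).symm ▸ hq
    obtain ⟨p, hpL, rfl⟩ := hq'
    have hcase : ε / 2 ≤ dist (γ p) a ∨ ε / 2 ≤ dist (γ p) b := by
      by_contra hcon
      push_neg at hcon
      have h := dist_triangle a (γ p) b
      rw [dist_comm a (γ p), ← hεdef] at h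
      linarith [hcon.1, hcon.2]
    have hlp : ε ^ 2 * δ ^ 2 / 64 * lam γ d ≤ lam γ p := by
      rcases hcase with h | h
      · exact hstep a₁ ha₁L p (by rwa [ha₁])
      · exact hstep b₁ hb₁L p (by rwa [hb₁])
    have hd2 : δ ^ 2 ≤ (dist d p) ^ 2 := by
      have h2 := hδ d hdD p hpL
      nlinarith [hδpos]
    have hsq : (lam γ d * (ε * δ ^ 2 / 8)) ^ 2 ≤ (dist (γ d) (γ p)) ^ 2 := by
      have h := keysq d p
      have h6 := mul_le_mul_of_nonneg_left hd2
        (mul_pos (hlam_pos γ hγΓ d) (hlam_pos γ hγΓ p)).le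
      have h7 := mul_le_mul_of_nonneg_left hlp (hlam_pos γ hγΓ d).le
      nlinarith [hlam_pos γ hγΓ d, hlam_pos γ hγΓ p, hδpos, hε, sq_nonneg (dist d p)]
    nlinarith [hsq, dist_nonneg (x := γ d) (y := γ p), hlam_pos γ hγΓ d, hδpos, hε,
      mul_pos (hlam_pos γ hγΓ d) (by positivity : (0:ℝ) < ε * δ ^ 2 / 8)]
  have hlowinf : lam γ d * (ε * δ ^ 2 / 8) ≤ infDist (γ d) L := by
    rw [infDist_eq_iInf]
    haveI : Nonempty L := ⟨⟨a, haL⟩⟩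
    exact le_ciInf fun q => hlow q q.2
  have hdistpos : 0 < infDist (γ d) L :=
    lt_of_lt_of_le (mul_pos (hlam_pos γ hγΓ d) (by positivity)) hlowinf
  -- UPPER BOUND on infDist (γ d) L
  -- antipodal point of a
  have ha1 : ‖(a : EuclideanSpace ℝ (Fin (n + 1)))‖ = 1 := mem_sphere_zero_iff_norm.mp a.2
  obtain ⟨a', ha'eq⟩ : ∃ a' : Metric.sphere (0 : EuclideanSpace ℝ (Fin (n + 1))) 1,
      (a' : EuclideanSpace ℝ (Fin (n + 1))) = -(a : EuclideanSpace ℝ (Fin (n + 1))) :=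
    ⟨⟨-(a : EuclideanSpace ℝ (Fin (n + 1))), by
      rw [mem_sphere_zero_iff_norm, norm_neg]; exact ha1⟩, rfl⟩
  have hfar : ∀ y, 1 ≤ dist y a ∨ 1 ≤ dist y a' := by
    intro y
    by_contra h
    push_neg at h
    obtain ⟨h1, h2⟩ := h
    have hy1 : ‖(y : EuclideanSpace ℝ (Fin (n + 1)))‖ = 1 := mem_sphere_zero_iff_norm.mp y.2
    rw [Subtype.dist_eq, dist_eq_norm] at h1 h2
    rw [ha'eq, sub_neg_eq_add] at h2
    have hpar := parallelogram_law_with_norm ℝ (y : EuclideanSpace ℝ (Fin (n + 1)))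
      (a : EuclideanSpace ℝ (Fin (n + 1)))
    rw [hy1, ha1] at hpar
    nlinarith [norm_nonneg ((y : EuclideanSpace ℝ (Fin (n + 1))) - a),
      norm_nonneg ((y : EuclideanSpace ℝ (Fin (n + 1))) + a)]
  have hprod1 : ∀ y z, 1 ≤ dist y z → s y * s z ≤ 2 := by
    intro y z h
    have hp : s y * s z * dist y z ≤ 2 := by rw [← key]; exact hsph2 _ _
    nlinarith [hspos y, hspos z]
  have hbdd : BddAbove (Set.range s) := by
    refine ⟨max (2 / s a) (2 / s a'), ?_⟩
    rintro _ ⟨y, rfl⟩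
    rcases hfar y with h | h
    · refine le_trans ?_ (le_max_left _ _)
      rw [le_div_iff₀ (hspos a)]
      exact hprod1 y a h
    · refine le_trans ?_ (le_max_right _ _)
      rw [le_div_iff₀ (hspos a')]
      exact hprod1 y a' h
  set C := sSup (Set.range s) with hCdef
  have hsleC : ∀ y, s y ≤ C := fun y => le_csSup hbdd ⟨y, rfl⟩
  have hCpos : 0 < C := lt_of_lt_of_le (hspos a) (hsleC a)
  obtain ⟨_, ⟨w, rfl⟩, hw⟩ := exists_lt_of_lt_csSup (⟨s a, a, rfl⟩ : (Set.range s).Nonempty) (half_lt_self hCpos)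
  -- pick p₀ ∈ {a, b} far from w
  obtain ⟨p₀, hp₀L, hp₀w⟩ : ∃ p₀ ∈ L, ε / 2 ≤ dist p₀ w := by
    have hchoice : ε / 2 ≤ dist a w ∨ ε / 2 ≤ dist b w := by
      by_contra hcon
      push_neg at hcon
      have h := dist_triangle a w b
      rw [dist_comm w b, ← hεdef] at h
      linarith [hcon.1, hcon.2]
    rcases hchoice with h | h
    exacts [⟨a, haL, h⟩, ⟨b, hbL, h⟩]
  have htri : s p₀ * s w * dist p₀ w ≤ s p₀ * s d * dist p₀ d + s d * s w * dist d w := by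
    have h := dist_triangle (γ p₀) (γ d) (γ w)
    rwa [key, key, key] at h
  have hsp₀ : s p₀ * ε ≤ 12 * s d := by
    have h1 : s p₀ ≤ 2 * s w := by linarith [hsleC p₀, hw]
    have h2 : s p₀ * s w * (ε / 2) ≤ 6 * (s d * s w) := by
      have e1 : s p₀ * s w * (ε / 2) ≤ s p₀ * s w * dist p₀ w :=
        mul_le_mul_of_nonneg_left hp₀w (mul_nonneg (hspos p₀).le (hspos w).le)
      have e2a : s p₀ * s d * dist p₀ d ≤ s p₀ * s d * 2 :=
        mul_le_mul_of_nonneg_left (hsph2 p₀ d) (mul_nonneg (hspos p₀).le (hspos d).le)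
      have e2b : s p₀ * s d ≤ 2 * s w * s d :=
        mul_le_mul_of_nonneg_right h1 (hspos d).le
      have e3 : s d * s w * dist d w ≤ s d * s w * 2 :=
        mul_le_mul_of_nonneg_left (hsph2 d w) (mul_nonneg (hspos d).le (hspos w).le)
      nlinarith [e1, htri, e2a, e2b, e3]
    nlinarith [h2, hspos w, hε]
  have hγp₀L : (γ : Equiv.Perm _) p₀ ∈ L := by
    rw [← hLinv γ hγΓ]; exact ⟨p₀, hp₀L, rfl⟩
  have hup : infDist (γ d) L ≤ 24 / ε * lam γ d := by
    refine le_trans (infDist_le_dist_of_mem hγp₀L) ?_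
    rw [key, div_mul_eq_mul_div, le_div_iff₀ hε]
    have h := hs2 d
    have g1 : s d * s p₀ * dist d p₀ ≤ s d * s p₀ * 2 :=
      mul_le_mul_of_nonneg_left (hsph2 d p₀) (mul_nonneg (hspos d).le (hspos p₀).le)
    have g2 := mul_le_mul_of_nonneg_right g1 hε.le
    have g3 := mul_le_mul_of_nonneg_left hsp₀ (by positivity : (0:ℝ) ≤ 2 * s d)
    nlinarith [g2, g3, h]
  -- combine
  have hud : Real.exp (u d) = Real.exp (u (γ d)) * lam γ d := hinv γ hγΓ d (hDsub hdD)
  have hExpos : 0 < Real.exp (u (γ d)) := Real.exp_pos _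
  have hprodup : Real.exp (u (γ d)) * infDist (γ d) L ≤ c₂ := by
    calc Real.exp (u (γ d)) * infDist (γ d) L
        ≤ Real.exp (u (γ d)) * (24 / ε * lam γ d) :=
          mul_le_mul_of_nonneg_left hup hExpos.le
      _ = 24 / ε * (Real.exp (u (γ d)) * lam γ d) := by ring
      _ = 24 / ε * Real.exp (u d) := by rw [← hud]
      _ ≤ 24 / ε * M := by
          apply mul_le_mul_of_nonneg_left (hMle d hdD); positivity
      _ = c₂ := by rw [hc₂def]; ring
  have hprodlow : c₁ ≤ Real.exp (u (γ d)) * infDist (γ d) L := by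
    calc c₁ = ε * δ ^ 2 / 8 * m := by rw [hc₁def]; ring
      _ ≤ ε * δ ^ 2 / 8 * Real.exp (u d) := by
          apply mul_le_mul_of_nonneg_left (hmle d hdD); positivity
      _ = Real.exp (u (γ d)) * (lam γ d * (ε * δ ^ 2 / 8)) := by rw [hud]; ring
      _ ≤ Real.exp (u (γ d)) * infDist (γ d) L :=
          mul_le_mul_of_nonneg_left hlowinf hExpos.le
  constructor
  · have hKc : 1 ≤ max c₂ c₁⁻¹ * c₁ := by
      have h := mul_le_mul_of_nonneg_right (le_max_right c₂ c₁⁻¹) hc₁.le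
      rwa [inv_mul_cancel₀ hc₁.ne'] at h
    rw [div_mul_div_comm, one_mul, div_le_iff₀ (by positivity)]
    have h5 := mul_le_mul_of_nonneg_left hprodlow hKpos.le
    nlinarith [h5, hKc]
  · rw [mul_one_div, le_div_iff₀ hdistpos]
    exact le_trans hprodup (le_max_left _ _)
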